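/- arXiv:1208.0396 — 3 statements merged into one kernel-verified Lean document; each statement's English description precedes it below -/
import Mathlib

section
/- Let A and B be finite strings (lists over a type α with decidable equality) of lengths m and n respectively, with 0 < m ≤ n. Then the maximum over all k with 0 ≤ k < m of lcsLen(cut(A,k), B) equals the maximum over all i, j with 0 ≤ i < m and 0 ≤ j < n of lcsLen(cut(A,i), cut(B,j)). In other words, a cyclic longest common subsequence of A and B is attained with B left uncut. -/
/-- `lcsLen s t` is the maximum length of a list that is a sublist
(subsequence) of both `s` and `t`. -/
def lcsLen {α : Type*} [DecidableEq α] (s t : List α) : ℕ :=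
  ((s.sublists.filter (fun l => decide (l.Sublist t))).map List.length).foldr max 0

/-!
Take a longest common subsequence `l` of `A.rotate i` and `B.rotate j`. The cut of `B` at `j`
splits `l = l₁ ++ l₂` with `l₁` inside `B.drop j` and `l₂` inside `B.take j`, so `l₂ ++ l₁`, a
rotation of `l`, is a subsequence of `B` itself. A rotation of a subsequence of `A.rotate i` is
again a subsequence of a suitable rotation of `A`, so the common subsequence survives with `B`
uncut and only the cut of `A` moved.
-/

namespace List

variable {α : Type*} {l s : List α}

theorem Sublist.exists_rotate_sublist_rotate (h : l <+ s) (n : ℕ) :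
    ∃ m, l.rotate n <+ s.rotate m := by
  rw [rotate_eq_drop_append_take_mod]
  obtain ⟨u, v, rfl, hu, hv⟩ := append_sublist_iff.1 ((take_append_drop (n % l.length) l).symm ▸ h)
  exact ⟨u.length, by rw [rotate_append_length_eq]; exact hv.append hu⟩

theorem exists_rotate_sublist_of_sublist_rotate {m : ℕ} (h : l <+ s.rotate m) :
    ∃ n, l.rotate n <+ s := by
  rw [rotate_eq_drop_append_take_mod] at h
  obtain ⟨l₁, l₂, rfl, h₁, h₂⟩ := sublist_append_iff.1 h
  refine ⟨l₁.length, ?_⟩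
  rw [rotate_append_length_eq, ← take_append_drop (m % s.length) s]
  exact h₂.append h₁

end List

section lcsLen

variable {α : Type*} [DecidableEq α]

theorem le_lcsLen {l s t : List α} (hs : l.Sublist s) (ht : l.Sublist t) :
    l.length ≤ lcsLen s t :=
  List.le_max_of_le' 0
    (List.mem_map_of_mem (List.mem_filter.2 ⟨List.mem_sublists.2 hs, by simpa⟩)) le_rfl

theorem exists_sublist_length_eq_lcsLen (s t : List α) :
    ∃ l : List α, l.Sublist s ∧ l.Sublist t ∧ l.length = lcsLen s t := by
  set L := (s.sublists.filter (fun l => decide (l.Sublist t))).map List.length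
  have hL : L ≠ [] :=
    List.ne_nil_of_mem (List.mem_map_of_mem (f := List.length)
      (List.mem_filter.2 ⟨List.mem_sublists.2 (List.nil_sublist s), by simp⟩))
  have hmem : lcsLen s t ∈ L := List.maximum_mem (List.foldr_max_of_ne_nil hL).symm
  obtain ⟨l, hl, hlen⟩ := List.mem_map.1 hmem
  obtain ⟨hls, hlt⟩ := List.mem_filter.1 hl
  exact ⟨l, List.mem_sublists.1 hls, by simpa using hlt, hlen⟩

theorem exists_lcsLen_rotate_rotate_le_lcsLen_rotate {s : List α} (hs : 0 < s.length)
    (t : List α) (i j : ℕ) :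
    ∃ k < s.length, lcsLen (s.rotate i) (t.rotate j) ≤ lcsLen (s.rotate k) t := by
  obtain ⟨l, hls, hlt, hlen⟩ := exists_sublist_length_eq_lcsLen (s.rotate i) (t.rotate j)
  obtain ⟨n, hnt⟩ := List.exists_rotate_sublist_of_sublist_rotate hlt
  obtain ⟨m, hms⟩ := hls.exists_rotate_sublist_rotate n
  refine ⟨(i + m) % s.length, Nat.mod_lt _ hs, ?_⟩
  rw [List.rotate_rotate, ← List.rotate_mod s] at hms
  calc lcsLen (s.rotate i) (t.rotate j) = (l.rotate n).length := by rw [List.length_rotate, hlen]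
    _ ≤ _ := le_lcsLen hms hnt

end lcsLen

/-- A cyclic LCS of `A` and `B` (with `0 < |A| ≤ |B|`) is attained with `B`
left uncut: the max over cuts of `A` alone equals the max over all cut pairs. -/
theorem clcs_attained_with_B_uncut {α : Type*} [DecidableEq α]
    (A B : List α) (hm : 0 < A.length) (hmn : A.length ≤ B.length) :
    (Finset.range A.length).sup (fun k => lcsLen (A.rotate k) B) =
      (Finset.range A.length).sup (fun i =>
        (Finset.range B.length).sup (fun j => lcsLen (A.rotate i) (B.rotate j))) := by
  have hB : 0 ∈ Finset.range B.length := Finset.mem_range.2 (hm.trans_le hmn)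
  apply le_antisymm
  · exact Finset.sup_mono_fun fun k _ => Finset.le_sup_of_le hB (by rw [List.rotate_zero])
  · refine Finset.sup_le fun i _ => Finset.sup_le fun j _ => ?_
    obtain ⟨k, hk, hle⟩ := exists_lcsLen_rotate_rotate_le_lcsLen_rotate hm B i j
    exact hle.trans (Finset.le_sup (f := fun k => lcsLen (A.rotate k) B) (Finset.mem_range.2 hk))
end

section
/- Let A and B be lists over a type α with decidable equality, of lengths m and n respectively. For every directed path of length ℓ from (0,0) to (m,n) in the LCS grid graph G_{A,B}, there exists a list of length m + n − ℓ that is a sublist of both A and B; consequently every such path satisfies ℓ ≥ m + n − lcsLen(A,B). -/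
/-- Edge relation of the LCS grid graph `G_{C,B}`: horizontal, vertical,
and (on character matches) diagonal edges. -/
def GridEdge {α : Type*} (C B : List α) (u v : ℕ × ℕ) : Prop :=
  (v = (u.1, u.2 + 1) ∧ u.1 ≤ C.length ∧ u.2 < B.length) ∨
  (v = (u.1 + 1, u.2) ∧ u.1 < C.length ∧ u.2 ≤ B.length) ∨
  (v = (u.1 + 1, u.2 + 1) ∧
    ∃ (h1 : u.1 < C.length) (h2 : u.2 < B.length), C.get ⟨u.1, h1⟩ = B.get ⟨u.2, h2⟩)

/-- `IsGridPath C B ℓ u v p` : `p` is a directed path of length `ℓ`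
from `u` to `v` in the LCS grid graph `G_{C,B}`. -/
def IsGridPath {α : Type*} (C B : List α) (ℓ : ℕ) (u v : ℕ × ℕ)
    (p : Fin (ℓ + 1) → ℕ × ℕ) : Prop :=
  p 0 = u ∧ p (Fin.last ℓ) = v ∧
    ∀ k : Fin ℓ, GridEdge C B (p k.castSucc) (p k.succ)

/-!
Walk the path backwards from `(m, n)`, keeping a common subsequence of the suffixes
`A.drop i` and `B.drop j` at the current vertex `(i, j)`. A horizontal or vertical edge
advances `i + j` by one and keeps the subsequence; a diagonal edge advances `i + j` by two
and prepends the matched character. Hence along a path of length `ℓ` from `(i, j)` the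
quantity `i + j + ℓ + |l|` stays equal to `m + n`.
-/

lemma length_le_lcsLen {α : Type*} [DecidableEq α] {l s t : List α}
    (hs : l.Sublist s) (ht : l.Sublist t) : l.length ≤ lcsLen s t :=
  List.le_max_of_le' 0 (List.mem_map_of_mem (by simpa [List.mem_sublists] using ⟨hs, ht⟩))
    le_rfl

lemma GridEdge.exists_common_sublist_drop {α : Type*} {A B : List α} {u v : ℕ × ℕ}
    (huv : GridEdge A B u v) {l : List α} (hA : l.Sublist (A.drop v.1))
    (hB : l.Sublist (B.drop v.2)) :
    ∃ l' : List α, l'.Sublist (A.drop u.1) ∧ l'.Sublist (B.drop u.2) ∧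
      v.1 + v.2 + l.length = u.1 + u.2 + 1 + l'.length := by
  rcases huv with ⟨rfl, -, -⟩ | ⟨rfl, -, -⟩ | ⟨rfl, hi, hj, hmatch⟩
  · exact ⟨l, hA, hB.trans (List.drop_sublist_drop_left _ (Nat.le_succ _)), by omega⟩
  · exact ⟨l, hA.trans (List.drop_sublist_drop_left _ (Nat.le_succ _)), hB, by omega⟩
  · refine ⟨A[u.1] :: l, ?_, ?_, by simp only [List.length_cons]; omega⟩
    · rw [List.drop_eq_getElem_cons hi]
      exact hA.cons_cons _
    · rw [List.drop_eq_getElem_cons hj]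
      exact (show A[u.1] = B[u.2] from hmatch) ▸ hB.cons_cons _

lemma IsGridPath.tail {α : Type*} {A B : List α} {ℓ : ℕ} {u v : ℕ × ℕ}
    {p : Fin (ℓ + 2) → ℕ × ℕ} (hp : IsGridPath A B (ℓ + 1) u v p) :
    GridEdge A B u (p 1) ∧ IsGridPath A B ℓ (p 1) v (Fin.tail p) := by
  obtain ⟨h0, hlast, hedge⟩ := hp
  refine ⟨h0 ▸ hedge 0, rfl, hlast, fun k => ?_⟩
  simpa only [Fin.tail, Fin.succ_castSucc] using hedge k.succ

lemma IsGridPath.exists_common_sublist_drop {α : Type*} {A B : List α} {ℓ : ℕ}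
    {u : ℕ × ℕ} {p : Fin (ℓ + 1) → ℕ × ℕ}
    (hp : IsGridPath A B ℓ u (A.length, B.length) p) :
    ∃ l : List α, l.Sublist (A.drop u.1) ∧ l.Sublist (B.drop u.2) ∧
      u.1 + u.2 + ℓ + l.length = A.length + B.length := by
  induction ℓ generalizing u with
  | zero =>
    obtain ⟨h0, hlast, -⟩ := hp
    obtain rfl : u = (A.length, B.length) := h0.symm.trans hlast
    exact ⟨[], by simp⟩
  | succ ℓ ih =>
    obtain ⟨hedge, htail⟩ := hp.tail
    obtain ⟨l, hA, hB, hlen⟩ := ih htail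
    obtain ⟨l', hA', hB', hlen'⟩ := hedge.exists_common_sublist_drop hA hB
    exact ⟨l', hA', hB', by omega⟩

/-- Every directed path of length `ℓ` from `(0,0)` to `(m,n)` in `G_{A,B}`
yields a common subsequence of length `m + n - ℓ`; hence
`ℓ ≥ m + n - lcsLen A B`. -/
theorem grid_path_gives_common_subsequence {α : Type*} [DecidableEq α]
    (A B : List α) (ℓ : ℕ) (p : Fin (ℓ + 1) → ℕ × ℕ)
    (hp : IsGridPath A B ℓ (0, 0) (A.length, B.length) p) :
    (∃ l : List α, l.length = A.length + B.length - ℓ ∧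
        l.Sublist A ∧ l.Sublist B) ∧
      A.length + B.length - lcsLen A B ≤ ℓ := by
  obtain ⟨l, hA, hB, hlen⟩ := hp.exists_common_sublist_drop
  simp only [List.drop_zero] at hA hB hlen
  have hlcs := length_le_lcsLen hA hB
  exact ⟨⟨l, by omega, hA, hB⟩, by omega⟩
end

section
/- Let A and B be lists over a type α with decidable equality, with A nonempty. For every natural number k, the longest-common-subsequence lengths for consecutive cyclic cuts of A differ by at most one: lcsLen(cut(A,k), B) ≤ lcsLen(cut(A,k+1), B) + 1 and lcsLen(cut(A,k+1), B) ≤ lcsLen(cut(A,k), B) + 1. -/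
section

variable {α : Type*} [DecidableEq α] {s s₁ s₂ t c : List α} {n : ℕ}

theorem le_lcsLen_s7 (hs : c.Sublist s) (ht : c.Sublist t) : c.length ≤ lcsLen s t :=
  List.le_max_of_le (List.mem_map_of_mem (List.mem_filter.2 ⟨List.mem_sublists.2 hs, by simpa⟩))
    le_rfl

theorem lcsLen_le_iff : lcsLen s t ≤ n ↔ ∀ c : List α, c.Sublist s → c.Sublist t → c.length ≤ n := by
  refine ⟨fun h c hs ht => (le_lcsLen_s7 hs ht).trans h, fun h => ?_⟩
  refine List.max_le_of_forall_le _ _ fun x hx => ?_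
  obtain ⟨c, hc, rfl⟩ := List.mem_map.1 hx
  rw [List.mem_filter, List.mem_sublists, decide_eq_true_iff] at hc
  exact h c hc.1 hc.2

theorem lcsLen_mono_left (h : s₁.Sublist s₂) : lcsLen s₁ t ≤ lcsLen s₂ t :=
  lcsLen_le_iff.2 fun _ hs ht => le_lcsLen_s7 (hs.trans h) ht

theorem lcsLen_append_le_left : lcsLen (s₁ ++ s₂) t ≤ lcsLen s₁ t + s₂.length := by
  refine lcsLen_le_iff.2 fun c hs ht => ?_
  obtain ⟨c₁, c₂, rfl, h₁, h₂⟩ := List.sublist_append_iff.1 hs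
  rw [List.length_append]
  exact Nat.add_le_add (le_lcsLen_s7 h₁ ((List.sublist_append_left c₁ c₂).trans ht)) h₂.length_le

theorem lcsLen_append_le_right : lcsLen (s₁ ++ s₂) t ≤ s₁.length + lcsLen s₂ t := by
  refine lcsLen_le_iff.2 fun c hs ht => ?_
  obtain ⟨c₁, c₂, rfl, h₁, h₂⟩ := List.sublist_append_iff.1 hs
  rw [List.length_append]
  exact Nat.add_le_add h₁.length_le (le_lcsLen_s7 h₂ ((List.sublist_append_right c₁ c₂).trans ht))

theorem lcsLen_le_lcsLen_rotate_one_add_one (l t : List α) :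
    lcsLen l t ≤ lcsLen (l.rotate 1) t + 1 := by
  rcases l with _ | ⟨a, s⟩
  · simp
  rw [List.rotate_cons_succ, List.rotate_zero, ← List.singleton_append]
  calc lcsLen ([a] ++ s) t ≤ 1 + lcsLen s t := lcsLen_append_le_right
    _ ≤ lcsLen (s ++ [a]) t + 1 := by
      have := lcsLen_mono_left (t := t) (List.sublist_append_left s [a])
      omega

theorem lcsLen_rotate_one_le_lcsLen_add_one (l t : List α) :
    lcsLen (l.rotate 1) t ≤ lcsLen l t + 1 := by
  rcases l with _ | ⟨a, s⟩
  · simp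
  rw [List.rotate_cons_succ, List.rotate_zero]
  calc lcsLen (s ++ [a]) t ≤ lcsLen s t + 1 := lcsLen_append_le_left
    _ ≤ lcsLen (a :: s) t + 1 := by
      have := lcsLen_mono_left (t := t) (List.sublist_cons_self a s)
      omega

end

theorem lcsLen_rotate_step_general {α : Type*} [DecidableEq α]
    (A B : List α) (k : ℕ) :
    lcsLen (A.rotate k) B ≤ lcsLen (A.rotate (k + 1)) B + 1 ∧
      lcsLen (A.rotate (k + 1)) B ≤ lcsLen (A.rotate k) B + 1 := by
  rw [← List.rotate_rotate]
  exact ⟨lcsLen_le_lcsLen_rotate_one_add_one _ B, lcsLen_rotate_one_le_lcsLen_add_one _ B⟩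

/-- The LCS lengths for consecutive cyclic cuts of `A` differ by at most one. -/
theorem lcsLen_rotate_step {α : Type*} [DecidableEq α]
    (A B : List α) (hA : A ≠ []) (k : ℕ) :
    lcsLen (A.rotate k) B ≤ lcsLen (A.rotate (k + 1)) B + 1 ∧
      lcsLen (A.rotate (k + 1)) B ≤ lcsLen (A.rotate k) B + 1 :=
  lcsLen_rotate_step_general A B k
end
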